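/- Let U be a complex Banach space and let X, Y be bounded linear operators on U satisfying the commutation relation X ∘ Y − Y ∘ X = Y, and assume moreover exp((2·π·Complex.I) • X) = 1 (this holds in the paper's applications, where X has integer spectrum). For a matrix A = (a, b; c, d) ∈ SL₂(ℤ) and τ in the upper half-plane ℍ write A·τ = (aτ+b)/(cτ+d), and define (cτ+d)^X := exp((Complex.log (c*τ+d)) • X) using the principal branch of the complex logarithm (note cτ+d ≠ 0 for τ ∈ ℍ). On functions φ : ℍ × ℂ × U → ℂ define [φ · A](τ, z, u) = φ( A·τ , z/(cτ+d) , (cτ+d)^X ( exp( (−(c*z)/(cτ+d)) • Y ) u ) ). Then this defines a right action of SL₂(ℤ): for all A, B ∈ SL₂(ℤ) and all (τ, z, u), one has [(φ · A) · B](τ, z, u) = [φ · (A*B)](τ, z, u). -/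

import Mathlib

/-!
Write `j^X := exp (log j • X)`. The relation `X * Y - Y * X = Y` gives
`exp (s • X) * Y = eˢ • Y * exp (s • X)`, so `exp (α • Y) * j^X = j^X * exp ((α / j) • Y)`,
and `exp (2πi • X) = 1` makes `j ↦ j^X` multiplicative although `log` is not. Hence
`(j, w) ↦ j^X * exp (w • Y)` is multiplicative for the law `(j₂, α) (j₁, β) = (j₂ j₁, α / j₁ + β)`
of the affine group `ℂˣ ⋉ ℂ`, and `(A, τ, z) ↦ (cτ + d, -cz / (cτ + d))` is a cocycle for this law:
`cτ + d` is the automorphy factor and `c / (cτ + d)` is its logarithmic derivative in `τ`.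
-/

open UpperHalfPlane
open scoped MatrixGroups Real

/-- The action of Proposition 5.8:
`[φ · A](τ, z, u) = φ(A·τ, z/(cτ+d), (cτ+d)^X (exp(-(cz/(cτ+d)) • Y) u))`,
where `(cτ+d)^X = exp(log(cτ+d) • X)` via the principal branch of log. -/
noncomputable def opSlashAction {U : Type*} [NormedAddCommGroup U] [NormedSpace ℂ U]
    [CompleteSpace U] (X Y : U →L[ℂ] U) (φ : ℍ → ℂ → U → ℂ)
    (A : Matrix.SpecialLinearGroup (Fin 2) ℤ) : ℍ → ℂ → U → ℂ :=
  fun τ z u =>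
    φ (A • τ) (z / (((A 1 0 : ℤ) : ℂ) * (τ : ℂ) + ((A 1 1 : ℤ) : ℂ)))
      ((NormedSpace.exp
          (Complex.log (((A 1 0 : ℤ) : ℂ) * (τ : ℂ) + ((A 1 1 : ℤ) : ℂ)) • X))
        ((NormedSpace.exp
            ((-(((A 1 0 : ℤ) : ℂ) * z) /
                (((A 1 0 : ℤ) : ℂ) * (τ : ℂ) + ((A 1 1 : ℤ) : ℂ))) • Y)) u))

open NormedSpace

section BanachAlgebra

variable {𝔸 : Type*} [NormedRing 𝔸] [NormedAlgebra ℂ 𝔸] [CompleteSpace 𝔸]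

theorem exp_add_smul_one (a : 𝔸) (s : ℂ) : exp (a + s • 1) = Complex.exp s • exp a := by
  let +nondep : NormedAlgebra ℚ 𝔸 := .restrictScalars ℚ ℂ 𝔸
  rw [exp_add_of_commute ((Commute.one_right a).smul_right s), ← Algebra.algebraMap_eq_smul_one,
    ← algebraMap_exp_comm, ← Complex.exp_eq_exp_ℂ, ← Algebra.commutes, Algebra.smul_def]

variable {X Y : 𝔸}

theorem semiconjBy_exp_smul_of_commutator_eq (hXY : X * Y - Y * X = Y) (s : ℂ) :
    SemiconjBy (exp (s • X)) Y (Complex.exp s • Y) := by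
  let +nondep : NormedAlgebra ℚ 𝔸 := .restrictScalars ℚ ℂ 𝔸
  have hY : SemiconjBy Y (s • X + s • 1) (s • X) := by
    rw [SemiconjBy, mul_add, mul_smul_comm, mul_smul_comm, mul_one, smul_mul_assoc,
      sub_eq_iff_eq_add'.mp hXY, smul_add]
  have hexp := hY.exp_right
  rw [SemiconjBy, exp_add_smul_one] at hexp
  rw [SemiconjBy, ← hexp, mul_smul_comm, smul_mul_assoc]

theorem exp_smul_mul_exp_smul_of_commutator_eq (hXY : X * Y - Y * X = Y) (s t : ℂ) :
    exp (s • X) * exp (t • Y) = exp ((Complex.exp s * t) • Y) * exp (s • X) := by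
  let +nondep : NormedAlgebra ℚ 𝔸 := .restrictScalars ℚ ℂ 𝔸
  have h := (semiconjBy_exp_smul_of_commutator_eq hXY s).smul_right t
  rw [smul_smul, mul_comm] at h
  exact h.exp_right

theorem periodic_exp_smul (hX : exp ((2 * π * Complex.I) • X) = 1) :
    Function.Periodic (fun s : ℂ => exp (s • X)) (2 * π * Complex.I) := fun s => by
  let +nondep : NormedAlgebra ℚ 𝔸 := .restrictScalars ℚ ℂ 𝔸
  simp only [add_smul, exp_add_of_commute ((Commute.refl X).smul_left _ |>.smul_right _), hX,
    mul_one]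

theorem exp_log_mul_smul (hX : exp ((2 * π * Complex.I) • X) = 1) {a b : ℂ} (ha : a ≠ 0)
    (hb : b ≠ 0) :
    exp (Complex.log (a * b) • X) = exp (Complex.log a • X) * exp (Complex.log b • X) := by
  let +nondep : NormedAlgebra ℚ 𝔸 := .restrictScalars ℚ ℂ 𝔸
  obtain ⟨n, hn⟩ : ∃ n : ℤ, Complex.log a + Complex.log b =
      Complex.log (a * b) + n * (2 * π * Complex.I) := by
    rw [← Complex.exp_eq_exp_iff_exists_int, Complex.exp_add, Complex.exp_log ha,
      Complex.exp_log hb, Complex.exp_log (mul_ne_zero ha hb)]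
  rw [← exp_add_of_commute ((Commute.refl X).smul_left _ |>.smul_right _), ← add_smul, hn]
  exact ((periodic_exp_smul hX).int_mul n _).symm

theorem exp_log_smul_mul_exp_smul_mul (hXY : X * Y - Y * X = Y)
    (hX : exp ((2 * π * Complex.I) • X) = 1) {j₁ j₂ : ℂ} (h₁ : j₁ ≠ 0) (h₂ : j₂ ≠ 0) (α β : ℂ) :
    exp (Complex.log j₂ • X) * exp (α • Y) * (exp (Complex.log j₁ • X) * exp (β • Y)) =
      exp (Complex.log (j₂ * j₁) • X) * exp ((α / j₁ + β) • Y) := by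
  let +nondep : NormedAlgebra ℚ 𝔸 := .restrictScalars ℚ ℂ 𝔸
  have hswap : exp (α • Y) * exp (Complex.log j₁ • X) =
      exp (Complex.log j₁ • X) * exp ((α / j₁) • Y) := by
    rw [exp_smul_mul_exp_smul_of_commutator_eq hXY, Complex.exp_log h₁, mul_div_cancel₀ _ h₁]
  rw [exp_log_mul_smul hX h₂ h₁, add_smul,
    exp_add_of_commute ((Commute.refl Y).smul_left _ |>.smul_right _)]
  simp only [mul_assoc]
  rw [← mul_assoc (exp (α • Y)), hswap]
  simp only [mul_assoc]

end BanachAlgebra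

namespace ModularGroup

theorem denom_mul (A B : SL(2, ℤ)) (τ : ℍ) :
    denom (A * B : SL(2, ℤ)) τ = denom A (B • τ : ℍ) * denom B τ := by
  simpa [σ] using denom_cocycle_σ A B τ

theorem mul_one_zero_mul_denom (A B : SL(2, ℤ)) (τ : ℍ) :
    ((A * B) 1 0 : ℂ) * denom B τ = A 1 0 + B 1 0 * denom (A * B : SL(2, ℤ)) τ := by
  have hB : ((B 0 0 * B 1 1 - B 0 1 * B 1 0 : ℤ) : ℂ) = 1 := by
    rw [← Matrix.det_fin_two, B.2, Int.cast_one]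
  rw [denom_apply, denom_apply]
  simp only [Matrix.SpecialLinearGroup.coe_mul, Matrix.mul_apply, Fin.sum_univ_two]
  push_cast at hB ⊢
  linear_combination (A 1 0 : ℂ) * hB

theorem one_zero_mul_div_denom_mul (A B : SL(2, ℤ)) (τ : ℍ) (z : ℂ) :
    (A * B) 1 0 * z / denom (A * B : SL(2, ℤ)) τ =
      A 1 0 * (z / denom B τ) / denom A (B • τ : ℍ) / denom B τ + B 1 0 * z / denom B τ := by
  have hA := denom_ne_zero A (B • τ)
  have hB := denom_ne_zero B τ
  have h := mul_one_zero_mul_denom A B τ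
  rw [denom_mul] at h ⊢
  field_simp
  linear_combination z * h

end ModularGroup

theorem opSlashAction_apply {U : Type*} [NormedAddCommGroup U] [NormedSpace ℂ U]
    [CompleteSpace U] (X Y : U →L[ℂ] U) (φ : ℍ → ℂ → U → ℂ) (A : SL(2, ℤ)) (τ : ℍ) (z : ℂ)
    (u : U) :
    opSlashAction X Y φ A τ z u = φ (A • τ) (z / denom A τ)
      ((exp (Complex.log (denom A τ) • X) * exp ((-(A 1 0 * z) / denom A τ) • Y)) u) :=
  rfl

/-- Proposition 5.8: if `X ∘ Y - Y ∘ X = Y` and `exp(2πi • X) = 1` then the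
slash action `opSlashAction` is a right action of `SL₂(ℤ)` on functions
`φ : ℍ × ℂ × U → ℂ`. -/
theorem opSlashAction_right_action {U : Type*} [NormedAddCommGroup U] [NormedSpace ℂ U]
    [CompleteSpace U] (X Y : U →L[ℂ] U)
    (hXY : X * Y - Y * X = Y)
    (hX : NormedSpace.exp (((2 * (π : ℂ) * Complex.I)) • X) = 1)
    (φ : ℍ → ℂ → U → ℂ) (A B : Matrix.SpecialLinearGroup (Fin 2) ℤ)
    (τ : ℍ) (z : ℂ) (u : U) :
    opSlashAction X Y (opSlashAction X Y φ A) B τ z u =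
      opSlashAction X Y φ (A * B) τ z u := by
  rw [opSlashAction_apply, opSlashAction_apply, opSlashAction_apply, ← mul_apply_eq_comp,
    exp_log_smul_mul_exp_smul_mul hXY hX (denom_ne_zero B τ) (denom_ne_zero A (B • τ)),
    mul_smul, div_div, mul_comm (denom B τ), ← ModularGroup.denom_mul]
  simp only [neg_div, ← neg_add, ← ModularGroup.one_zero_mul_div_denom_mul]
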